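/- The degenerate Stirling numbers of the second kind satisfy S_{2,λ}(m,n) = Σ_{l=n}^{m} S₂(l,n) · λ^{m-l} · S₁(m,l) for all m ≥ n ≥ 0. -/

import Mathlib

/-
For fixed `λ`, the Vandermonde identity for degenerate falling factorials makes
`x ↦ (1+λt)^{x/λ}` an additive character into power series, so `((1+λt)^{1/λ} - 1)^n` is its
`n`-th forward difference at `0`. Taking the coefficient of `tᵐ/m!` gives
`n! S_{2,λ}(m,n) = Δⁿ (x)_{m,λ} |_{x=0}`. Expanding `(x)_{m,λ} = Σ_j S₁(m,j) λ^{m-j} xʲ` and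
using `Δⁿ xʲ |_{x=0} = n! S₂(j,n)` gives the formula.
-/

open Finset PowerSeries

/-- The degenerate falling factorial `(x)_{n,λ}`. -/
noncomputable def df (l x : ℚ) (n : ℕ) : ℚ := ∏ i ∈ Finset.range n, (x - (i : ℚ) * l)

/-- The formal power series `(1+λt)^{x/λ} := Σ (x)_{n,λ} tⁿ/n!`. -/
noncomputable def B (l x : ℚ) : PowerSeries ℚ :=
  PowerSeries.mk fun n => df l x n / n.factorial

/-- Signed Stirling numbers of the first kind. -/
def S1 : ℕ → ℕ → ℚ
  | 0, 0 => 1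
  | 0, _ + 1 => 0
  | _ + 1, 0 => 0
  | n + 1, k + 1 => S1 n k - (n : ℚ) * S1 n (k + 1)

/-- Stirling numbers of the second kind. -/
def S2 : ℕ → ℕ → ℚ
  | 0, 0 => 1
  | 0, _ + 1 => 0
  | _ + 1, 0 => 0
  | n + 1, k + 1 => ((k : ℚ) + 1) * S2 n (k + 1) + S2 n k

-- `]^` is a token of Mathlib, hence the space in `Δ_[h] ^[n]`.
open scoped fwdDiff

theorem map_fwdDiff_iter {M G H F : Type*} [AddCommMonoid M] [AddCommGroup G] [AddCommGroup H]
    [FunLike F G H] [AddMonoidHomClass F G H] (L : F) (f : M → G) (h y : M) (n : ℕ) :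
    L (Δ_[h] ^[n] f y) = Δ_[h] ^[n] (fun x => L (f x)) y := by
  simp [fwdDiff_iter_eq_sum_shift, map_sum, map_zsmul]

theorem fwdDiff_iter_sum_mul_pow_apply {R : Type*} [CommRing R] (P : ℕ → R) (N n : ℕ) (y : R) :
    Δ_[1] ^[n] (fun x => ∑ j ∈ range N, P j * x ^ j) y
      = ∑ j ∈ range N, P j * Δ_[1] ^[n] (fun x => x ^ j) y := by
  simp_rw [← Finset.sum_apply _ _ (fun j x ↦ P j * x ^ j), fwdDiff_iter_finsetSum, Finset.sum_apply,
    ← smul_eq_mul, ← Pi.smul_def, fwdDiff_iter_const_smul, Pi.smul_apply]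

theorem fwdDiff_iter_succ_mul_self {R : Type*} [CommRing R] (g : R → R) (n : ℕ) :
    Δ_[1] ^[n + 1] (fun x => x * g x) 0 = (n + 1) * Δ_[1] ^[n] g 1 := by
  rw [fwdDiff_iter_eq_sum_shift, fwdDiff_iter_eq_sum_shift, sum_range_succ', mul_sum]
  simp only [zero_add, nsmul_eq_mul, mul_one, Nat.cast_zero, zero_mul, smul_zero, add_zero]
  refine sum_congr rfl fun k _ => ?_
  have hchoose : ((n : R) + 1) * n.choose k = (n + 1).choose (k + 1) * ((k : R) + 1) := by
    exact_mod_cast congrArg (Nat.cast : ℕ → R) (Nat.add_one_mul_choose_eq n k)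
  rw [Nat.add_sub_add_right, zsmul_eq_mul, zsmul_eq_mul, add_comm 1 (k : R)]
  push_cast
  linear_combination (-((-1 : R) ^ (n - k) * g (k + 1))) * hchoose

lemma S2_eq_zero_of_lt {n k : ℕ} (h : n < k) : S2 n k = 0 := by
  induction n generalizing k with
  | zero => obtain ⟨k, rfl⟩ := Nat.exists_eq_add_of_lt h; rfl
  | succ n ih =>
    obtain ⟨k, rfl⟩ := Nat.exists_eq_add_of_le' (Nat.one_le_of_lt h)
    simp [S2, ih (by omega : n < k), ih (by omega : n < k + 1)]

theorem fwdDiff_iter_pow_apply_zero (j n : ℕ) :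
    Δ_[1] ^[n] (fun x : ℚ => x ^ j) 0 = n.factorial * S2 j n := by
  induction j generalizing n with
  | zero =>
    rcases n with _ | n
    · simp [S2]
    · rw [fwdDiff_iter_pow_eq_zero_of_lt (Nat.succ_pos n)]
      simp [S2]
  | succ j ih =>
    rcases n with _ | n
    · simp [S2]
    · have hshift : Δ_[1] ^[n] (fun x : ℚ => x ^ j) 1
          = Δ_[1] ^[n] (fun x : ℚ => x ^ j) 0 + Δ_[1] ^[n + 1] (fun x : ℚ => x ^ j) 0 := by
        rw [Function.iterate_succ_apply', fwdDiff, zero_add, add_sub_cancel]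
      simp_rw [pow_succ']
      rw [fwdDiff_iter_succ_mul_self, hshift, ih, ih, S2, Nat.factorial_succ]
      push_cast
      ring

lemma S1_eq_zero_of_lt {n k : ℕ} (h : n < k) : S1 n k = 0 := by
  induction n generalizing k with
  | zero => obtain ⟨k, rfl⟩ := Nat.exists_eq_add_of_lt h; rfl
  | succ n ih =>
    obtain ⟨k, rfl⟩ := Nat.exists_eq_add_of_le' (Nat.one_le_of_lt h)
    simp [S1, ih (by omega : n < k), ih (by omega : n < k + 1)]

noncomputable def dfPoly (l : ℚ) (m : ℕ) : Polynomial ℚ :=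
  ∏ i ∈ range m, (Polynomial.X - Polynomial.C ((i : ℚ) * l))

lemma eval_dfPoly (l x : ℚ) (m : ℕ) : (dfPoly l m).eval x = df l x m := by
  simp [dfPoly, df, Polynomial.eval_prod]

lemma natDegree_dfPoly_le (l : ℚ) (m : ℕ) : (dfPoly l m).natDegree ≤ m :=
  (Polynomial.natDegree_prod_le _ _).trans (by simp only [Polynomial.natDegree_X_sub_C]; simp)

lemma coeff_dfPoly (l : ℚ) (m j : ℕ) : (dfPoly l m).coeff j = S1 m j * l ^ (m - j) := by
  induction m generalizing j with
  | zero => cases j <;> simp [dfPoly, S1, Polynomial.coeff_one]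
  | succ m ih =>
    rw [dfPoly, prod_range_succ, ← dfPoly]
    cases j with
    | zero =>
      rcases m with _ | m
      · simp [S1]
      · simp [Polynomial.mul_coeff_zero, ih, S1]
    | succ k =>
      rw [Polynomial.coeff_mul_X_sub_C, ih, ih]
      rcases lt_or_ge k m with hk | hk
      · rw [Nat.add_sub_add_right, show m - k = m - (k + 1) + 1 by omega, S1]
        ring
      · simp [S1, S1_eq_zero_of_lt (Nat.lt_succ_of_le hk)]

lemma df_eq_sum_S1 (l x : ℚ) (m : ℕ) :
    df l x m = ∑ j ∈ range (m + 1), S1 m j * l ^ (m - j) * x ^ j := by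
  rw [← eval_dfPoly, Polynomial.eval_eq_sum_range' (Nat.lt_succ_of_le (natDegree_dfPoly_le l m))]
  simp only [coeff_dfPoly]

theorem fwdDiff_iter_df_apply_zero (l : ℚ) (m n : ℕ) :
    Δ_[1] ^[n] (fun x => df l x m) 0
      = n.factorial * ∑ j ∈ Icc n m, S2 j n * l ^ (m - j) * S1 m j := by
  simp_rw [df_eq_sum_S1, fwdDiff_iter_sum_mul_pow_apply, fwdDiff_iter_pow_apply_zero, mul_sum]
  refine (sum_subset (fun j hj => ?_) fun j _ hj => ?_).symm.trans (sum_congr rfl fun j _ => by ring)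
  · simp only [mem_Icc, mem_range] at hj ⊢
    omega
  · rw [S2_eq_zero_of_lt (by simp_all)]
    ring

lemma df_succ (l x : ℚ) (n : ℕ) : df l x (n + 1) = df l x n * (x - n * l) :=
  prod_range_succ _ _

lemma df_add (l x y : ℚ) (n : ℕ) :
    df l (x + y) n = ∑ p ∈ antidiagonal n, n.choose p.1 * (df l x p.1 * df l y p.2) := by
  induction n with
  | zero => simp [df]
  | succ n ih =>
    rw [Finset.sum_antidiagonal_choose_succ_mul (fun i j => df l x i * df l y j), ← sum_add_distrib,
      df_succ, ih, sum_mul]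
    refine sum_congr rfl fun p hp => ?_
    have hp' : p.1 + p.2 = n := mem_antidiagonal.mp hp
    rw [Nat.choose_symm_of_eq_add hp'.symm, df_succ, df_succ, ← hp']
    push_cast
    ring

lemma B_add (l x y : ℚ) : B l (x + y) = B l x * B l y := by
  ext n
  simp only [B, coeff_mul, coeff_mk, df_add, sum_div]
  refine sum_congr rfl fun p hp => ?_
  rw [← mem_antidiagonal.mp hp, Nat.cast_add_choose]
  field_simp

lemma B_zero (l : ℚ) : B l 0 = 1 := by
  ext n
  cases n with
  | zero => simp [B, df]
  | succ n => simp [B, df, prod_range_succ']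

noncomputable def B.addChar (l : ℚ) : AddChar ℚ ℚ⟦X⟧ where
  toFun := B l
  map_zero_eq_one' := B_zero l
  map_add_eq_mul' := B_add l

theorem fwdDiff_iter_B_zero (l : ℚ) (n : ℕ) : Δ_[1] ^[n] (B l) 0 = (B l 1 - 1) ^ n := by
  simpa [B.addChar, B_zero] using fwdDiff_addChar_eq (B.addChar l) 0 1 n

/-- If `S2l` are the degenerate Stirling numbers of the second kind, defined by
`(1/n!)((1+λt)^{1/λ} - 1)^n = Σ_{m≥n} S_{2,λ}(m,n) tᵐ/m!`, then
`S_{2,λ}(m,n) = Σ_{l=n}^m S₂(l,n) λ^{m-l} S₁(m,l)` for `m ≥ n`. -/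
theorem stmt11 (l : ℚ) (S2l : ℕ → ℕ → ℚ)
    (hS : ∀ n : ℕ, (B l 1 - 1) ^ n
      = (n.factorial : ℚ) • PowerSeries.mk fun m => S2l m n / m.factorial) :
    ∀ m n : ℕ, n ≤ m →
      S2l m n = ∑ j ∈ Finset.Icc n m, S2 j n * l ^ (m - j) * S1 m j := by
  intro m n _
  have hm : (m.factorial : ℚ) ≠ 0 := by positivity
  have key : (n.factorial : ℚ) * S2l m n = Δ_[1] ^[n] (fun x => df l x m) 0 := by
    have h := map_fwdDiff_iter ((m.factorial : ℚ) • coeff (R := ℚ) m) (B l) 1 0 n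
    rw [fwdDiff_iter_B_zero, hS n] at h
    simpa [B, hm, mul_div_cancel₀, mul_left_comm] using h
  rw [fwdDiff_iter_df_apply_zero] at key
  exact mul_left_cancel₀ (by positivity) key
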